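/- arXiv:2402.17094 — 5 statements merged into one kernel-verified Lean document; each statement's English description precedes it below -/
import Mathlib

section
/- Let $\{v_n\}_{n=0}^{N-1}$ be a finite sequence of complex numbers and let $H$ be an integer with $0 \le H \le N-1$. Then $\left|\frac{1}{N}\sum_{n=0}^{N-1} v_n\right|^2 \le \frac{N+H}{N^2(H+1)}\sum_{n=0}^{N-1}|v_n|^2 + \frac{2(N+H)}{N^2(H+1)^2}\sum_{h=1}^{H}(H+1-h)\,\mathrm{Re}\left(\sum_{n=0}^{N-h-1}\overline{v_{n+h}}\,v_n\right)$. -/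
/-!
Extend `v` by zero to `u : ℤ → ℂ` and form the window sums `w n = ∑_{h ≤ H} u (n - h)`, which
vanish outside `[0, N + H)` and add up to `(H + 1) ∑ v`. Cauchy–Schwarz over these `N + H` terms
bounds `(H + 1)² |∑ v|²` by `(N + H) ∑ |w n|²`. Expanding, `∑ |w n|² = ∑_{i, j ≤ H} R (i - j)`
with `R` the autocorrelation of `u`; since `R (-d) = conj (R d)`, grouping the pairs by
`d = i - j` gives `(H + 1) R 0 + 2 ∑_{d=1}^{H} (H + 1 - d) Re R d`.
-/

open Finset ComplexConjugate

theorem norm_sum_sq_le_card_mul_sum_norm_sq {ι E : Type*} [SeminormedAddCommGroup E]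
    (s : Finset ι) (f : ι → E) :
    ‖∑ i ∈ s, f i‖ ^ 2 ≤ #s * ∑ i ∈ s, ‖f i‖ ^ 2 :=
  (pow_le_pow_left₀ (norm_nonneg _) (norm_sum_le s f) 2).trans sq_sum_le_card_mul_sum_sq

theorem tsum_int_eq_sum_range {M : Type*} [AddCommMonoid M] [TopologicalSpace M] {f : ℤ → M}
    {K : ℕ} (hf : Function.support f ⊆ Set.Ico 0 K) :
    ∑' k, f k = ∑ n ∈ range K, f n := by
  rw [tsum_eq_sum (s := (range K).map Nat.castEmbedding), sum_map]
  · rfl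
  intro k hk
  by_contra hfk
  obtain ⟨h0, hK⟩ := hf hfk
  refine hk (mem_map.2 ⟨k.toNat, mem_range.2 (by omega), ?_⟩)
  simp [h0]

theorem sum_sum_range_sub_of_even {R : Type*} [CommRing R] {f : ℤ → R} (hf : f.Even) (H : ℕ) :
    ∑ i ∈ range (H + 1), ∑ j ∈ range (H + 1), f (i - j) =
      ((H : R) + 1) * f 0 + 2 * ∑ d ∈ Icc 1 H, ((H : R) + 1 - d) * f d := by
  induction H with
  | zero => simp
  | succ H ih =>
    have hrow : ∑ j ∈ range (H + 1), f ((H + 1 : ℕ) - j) = ∑ d ∈ Icc 1 (H + 1), f d :=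
      sum_nbij' (fun j => H + 1 - j) (fun d => H + 1 - d)
        (fun j hj => by simp only [mem_range, mem_Icc] at hj ⊢; omega)
        (fun d hd => by simp only [mem_range, mem_Icc] at hd ⊢; omega)
        (fun j hj => by simp only [mem_range] at hj; omega)
        (fun d hd => by simp only [mem_Icc] at hd; omega)
        (fun j hj => by simp only [mem_range] at hj; congr 1; omega)
    have hcol : ∑ i ∈ range (H + 1), f (i - (H + 1 : ℕ)) = ∑ d ∈ Icc 1 (H + 1), f d := by
      rw [← hrow]
      exact sum_congr rfl fun i _ => by rw [← hf, neg_sub]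
    simp only [sum_range_succ (n := H + 1), sum_add_distrib, ih, hcol, hrow, sub_self,
      sum_Icc_succ_top (Nat.le_add_left 1 H)]
    push_cast
    simp only [add_sub_right_comm _ (1 : R), add_mul _ (1 : R), one_mul, sum_add_distrib]
    ring

namespace VanDerCorput

/-- Sums over `ℤ` are `tsum`s: for finitely supported functions they are finite sums, and
reindexing them by a translation needs no side conditions. -/
noncomputable def autocorr (u : ℤ → ℂ) (d : ℤ) : ℂ := ∑' m, conj (u (m + d)) * u m

def window (H : ℕ) (u : ℤ → ℂ) (n : ℤ) : ℂ := ∑ h ∈ range (H + 1), u (n - h)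

theorem autocorr_neg (u : ℤ → ℂ) (d : ℤ) : autocorr u (-d) = conj (autocorr u d) := by
  rw [autocorr, autocorr, Complex.conj_tsum, ← (Equiv.addRight d).tsum_eq]
  simp [mul_comm]

theorem even_re_autocorr (u : ℤ → ℂ) : Function.Even fun d => (autocorr u d).re :=
  fun d => by simp only [autocorr_neg, Complex.conj_re]

section Window

variable {N : ℕ} (H : ℕ) {u : ℤ → ℂ} (hu : Function.support u ⊆ Set.Ico 0 N)
include hu

theorem sum_range_window : ∑ n ∈ range (N + H), window H u n = (H + 1) * ∑' k, u k := by
  simp only [window]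
  rw [sum_comm]
  have hshift : ∀ h ∈ range (H + 1), ∑ n ∈ range (N + H), u (n - h) = ∑' k, u k := by
    intro h hh
    rw [mem_range] at hh
    rw [← (Equiv.subRight (h : ℤ)).tsum_eq, tsum_int_eq_sum_range]
    · rfl
    intro k hk
    obtain ⟨h0, hN⟩ := hu (a := k - h) hk
    exact ⟨by omega, by omega⟩
  rw [sum_congr rfl hshift, sum_const, card_range, nsmul_eq_mul]
  push_cast
  ring

theorem sum_range_mul_conj_eq_autocorr {i : ℕ} (hi : i ≤ H) (j : ℕ) :
    ∑ n ∈ range (N + H), u (n - i) * conj (u (n - j)) = autocorr u (i - j) := by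
  calc ∑ n ∈ range (N + H), u (n - i) * conj (u (n - j))
      = ∑' n : ℤ, u (n - i) * conj (u (n - j)) := by
        refine (tsum_int_eq_sum_range (f := fun n => u (n - i) * conj (u (n - j)))
          fun k hk => ?_).symm
        obtain ⟨h0, hN⟩ := hu (left_ne_zero_of_mul hk)
        exact ⟨by omega, by omega⟩
    _ = ∑' m : ℤ, u (m + i - i) * conj (u (m + i - j)) :=
        ((Equiv.addRight (i : ℤ)).tsum_eq (fun n => u (n - i) * conj (u (n - j)))).symm
    _ = autocorr u (i - j) := by
        refine tsum_congr fun m => ?_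
        rw [mul_comm, add_sub_cancel_right, add_sub_assoc]

theorem sum_range_norm_sq_window :
    ∑ n ∈ range (N + H), ‖window H u n‖ ^ 2 =
      ∑ i ∈ range (H + 1), ∑ j ∈ range (H + 1), (autocorr u (i - j)).re := by
  calc ∑ n ∈ range (N + H), ‖window H u n‖ ^ 2
      = (∑ n ∈ range (N + H), window H u n * conj (window H u n)).re := by
        simp [Complex.re_sum, Complex.mul_conj, Complex.sq_norm]
    _ = (∑ i ∈ range (H + 1), ∑ j ∈ range (H + 1),
          ∑ n ∈ range (N + H), u (n - i) * conj (u (n - j))).re := by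
        simp only [window, map_sum, sum_mul_sum]
        rw [sum_comm]
        simp only [sum_comm (s := range (N + H))]
    _ = (∑ i ∈ range (H + 1), ∑ j ∈ range (H + 1), autocorr u (i - j)).re := by
        refine congrArg _ (sum_congr rfl fun i hi => sum_congr rfl fun j _ => ?_)
        exact sum_range_mul_conj_eq_autocorr H hu (Nat.lt_succ_iff.1 (mem_range.1 hi)) j
    _ = _ := by simp only [Complex.re_sum]

theorem sq_mul_norm_tsum_sq_le :
    ((H : ℝ) + 1) ^ 2 * ‖∑' k, u k‖ ^ 2 ≤
      (N + H) * (((H : ℝ) + 1) * (autocorr u 0).re +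
        2 * ∑ d ∈ Icc 1 H, ((H : ℝ) + 1 - d) * (autocorr u d).re) := by
  calc ((H : ℝ) + 1) ^ 2 * ‖∑' k, u k‖ ^ 2
      = ‖∑ n ∈ range (N + H), window H u n‖ ^ 2 := by
        rw [sum_range_window H hu, norm_mul, mul_pow]
        norm_cast
    _ ≤ (N + H) * ∑ n ∈ range (N + H), ‖window H u n‖ ^ 2 := by
        simpa using norm_sum_sq_le_card_mul_sum_norm_sq (range (N + H))
          fun n : ℕ => window H u n
    _ = _ := by
        rw [sum_range_norm_sq_window H hu, sum_sum_range_sub_of_even (even_re_autocorr u)]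

end Window

def zeroExtend (N : ℕ) (v : ℕ → ℂ) (k : ℤ) : ℂ := if 0 ≤ k ∧ k < N then v k.toNat else 0

section ZeroExtend

variable (N : ℕ) (v : ℕ → ℂ)

theorem support_zeroExtend_subset : Function.support (zeroExtend N v) ⊆ Set.Ico 0 N := by
  intro k hk
  by_contra h
  exact hk (if_neg h)

theorem zeroExtend_natCast {n : ℕ} (hn : n < N) : zeroExtend N v n = v n := by
  simp [zeroExtend, hn]

theorem tsum_zeroExtend : ∑' k, zeroExtend N v k = ∑ n ∈ range N, v n := by
  rw [tsum_int_eq_sum_range (support_zeroExtend_subset N v)]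
  exact sum_congr rfl fun n hn => zeroExtend_natCast N v (mem_range.1 hn)

theorem autocorr_zeroExtend (h : ℕ) :
    autocorr (zeroExtend N v) h = ∑ n ∈ range (N - h), conj (v (n + h)) * v n := by
  rw [autocorr, tsum_int_eq_sum_range (K := N - h)]
  · refine sum_congr rfl fun n hn => ?_
    rw [mem_range] at hn
    rw [← Nat.cast_add, zeroExtend_natCast N v (by omega), zeroExtend_natCast N v (by omega)]
  intro k hk
  obtain ⟨-, h₁⟩ := support_zeroExtend_subset N v ((map_ne_zero _).1 (left_ne_zero_of_mul hk))
  obtain ⟨h₂, -⟩ := support_zeroExtend_subset N v (right_ne_zero_of_mul hk)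
  exact ⟨h₂, by omega⟩

theorem re_autocorr_zeroExtend_zero :
    (autocorr (zeroExtend N v) 0).re = ∑ n ∈ range N, ‖v n‖ ^ 2 := by
  simpa [Complex.re_sum, Complex.conj_mul', ← Complex.ofReal_pow]
    using congrArg Complex.re (autocorr_zeroExtend N v 0)

end ZeroExtend

end VanDerCorput

open VanDerCorput

theorem vdc_estimate_general (N H : ℕ) (v : ℕ → ℂ) :
    ‖(N : ℂ)⁻¹ * ∑ n ∈ range N, v n‖ ^ 2 ≤
      ((N : ℝ) + (H : ℝ)) / ((N : ℝ) ^ 2 * ((H : ℝ) + 1)) *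
          ∑ n ∈ range N, ‖v n‖ ^ 2 +
        2 * ((N : ℝ) + (H : ℝ)) / ((N : ℝ) ^ 2 * ((H : ℝ) + 1) ^ 2) *
          ∑ h ∈ Icc 1 H, ((H : ℝ) + 1 - (h : ℝ)) *
            (∑ n ∈ range (N - h), (starRingEnd ℂ) (v (n + h)) * v n).re := by
  have key := sq_mul_norm_tsum_sq_le H (support_zeroExtend_subset N v)
  simp only [tsum_zeroExtend, re_autocorr_zeroExtend_zero, autocorr_zeroExtend] at key
  set S := ∑ n ∈ range N, v n
  set A := ∑ n ∈ range N, ‖v n‖ ^ 2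
  set T := ∑ h ∈ Icc 1 H, ((H : ℝ) + 1 - (h : ℝ)) *
    (∑ n ∈ range (N - h), (starRingEnd ℂ) (v (n + h)) * v n).re
  have hH : ((H : ℝ) + 1) ^ 2 ≠ 0 := by positivity
  have lhs : ‖(N : ℂ)⁻¹ * S‖ ^ 2 =
      ((H : ℝ) + 1) ^ 2 * ‖S‖ ^ 2 / ((N : ℝ) ^ 2 * ((H : ℝ) + 1) ^ 2) := by
    rw [norm_mul, norm_inv, Complex.norm_natCast, mul_comm ((N : ℝ) ^ 2),
      mul_div_mul_left _ _ hH]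
    ring
  have rhs : ((N : ℝ) + H) / ((N : ℝ) ^ 2 * ((H : ℝ) + 1)) * A +
      2 * ((N : ℝ) + H) / ((N : ℝ) ^ 2 * ((H : ℝ) + 1) ^ 2) * T =
      ((N : ℝ) + H) * (((H : ℝ) + 1) * A + 2 * T) / ((N : ℝ) ^ 2 * ((H : ℝ) + 1) ^ 2) := by
    field_simp
  rw [lhs, rhs]
  exact div_le_div_of_nonneg_right key (by positivity)

/-- Van der Corput's estimate for finite sequences of complex numbers. -/
theorem vdc_estimate (N H : ℕ) (hN : 1 ≤ N) (hH : H ≤ N - 1) (v : ℕ → ℂ) :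
    ‖(N : ℂ)⁻¹ * ∑ n ∈ range N, v n‖ ^ 2 ≤
      ((N : ℝ) + (H : ℝ)) / ((N : ℝ) ^ 2 * ((H : ℝ) + 1)) *
          ∑ n ∈ range N, ‖v n‖ ^ 2 +
        2 * ((N : ℝ) + (H : ℝ)) / ((N : ℝ) ^ 2 * ((H : ℝ) + 1) ^ 2) *
          ∑ h ∈ Icc 1 H, ((H : ℝ) + 1 - (h : ℝ)) *
            (∑ n ∈ range (N - h), (starRingEnd ℂ) (v (n + h)) * v n).re :=
  vdc_estimate_general N H v
end

section
/- Let $\{u_n\}_{n=0}^{N-1}$ be a finite sequence of complex numbers. Then $\sup_{t\in\mathbb{R}}\left|\sum_{n=0}^{N-1} u_n e^{2\pi i n t}\right|^2 \le 2\sum_{n=0}^{N-1}|u_n|^2 + 4\sum_{h=1}^{N-1}\left|\sum_{n=0}^{N-h-1}\overline{u_{n+h}}\,u_n\right|$. -/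
/-!
Expanding `‖∑ vₙ‖² = ∑ₙ ∑ₘ ⟪vₙ, vₘ⟫` and grouping the off-diagonal terms by the lag `h = n - m`
gives `‖∑ vₙ‖² = ∑ ‖vₙ‖² + 2 Re ∑_{h ≥ 1} ∑ₘ ⟪vₘ₊ₕ, vₘ⟫` in any inner product space.
For `vₙ = uₙ ζⁿ` with `|ζ| = 1` the lag-`h` correlation is that of `u` times `ζ̄ʰ`, so its modulus
does not depend on `ζ = e^{2πit}`, and the bound holds uniformly in `t`.
-/

open Finset

open scoped InnerProductSpace ComplexConjugate

namespace Finset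

theorem sum_range_sum_range_eq_sum_diag_add_sum_lt {M : Type*} [AddCommMonoid M] (N : ℕ)
    (G : ℕ → ℕ → M) :
    ∑ n ∈ range N, ∑ m ∈ range N, G n m
      = ∑ n ∈ range N, G n n + ∑ n ∈ range N, ∑ m ∈ range n, (G n m + G m n) := by
  induction N with
  | zero => simp
  | succ k ih =>
    simp only [sum_range_succ, sum_add_distrib, ih]
    abel

theorem sum_range_sum_range_lt_eq_sum_lag {M : Type*} [AddCommMonoid M] (N : ℕ)
    (F : ℕ → ℕ → M) :
    ∑ n ∈ range N, ∑ m ∈ range n, F n m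
      = ∑ h ∈ Icc 1 (N - 1), ∑ m ∈ range (N - h), F (m + h) m := by
  rw [sum_sigma', sum_sigma']
  refine sum_nbij' (fun x => ⟨x.1 - x.2, x.2⟩) (fun y => ⟨y.2 + y.1, y.2⟩) ?_ ?_ ?_ ?_ ?_
  all_goals rintro ⟨a, b⟩ hab
  all_goals simp only [mem_sigma, mem_range, mem_Icc, Sigma.mk.injEq, heq_eq_eq, and_true] at hab ⊢
  all_goals first | omega | (congr 1; omega)

end Finset

section
variable {𝕜 E : Type*} [RCLike 𝕜] [SeminormedAddCommGroup E] [InnerProductSpace 𝕜 E]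

theorem norm_sum_range_sq_eq_sum_norm_sq_add (v : ℕ → E) (N : ℕ) :
    ‖∑ n ∈ range N, v n‖ ^ 2 = ∑ n ∈ range N, ‖v n‖ ^ 2 +
      2 * ∑ h ∈ Icc 1 (N - 1), RCLike.re (∑ n ∈ range (N - h), ⟪v (n + h), v n⟫_𝕜) := by
  rw [← inner_self_eq_norm_sq (𝕜 := 𝕜), sum_inner]
  simp_rw [inner_sum]
  rw [sum_range_sum_range_eq_sum_diag_add_sum_lt, sum_range_sum_range_lt_eq_sum_lag]
  simp only [map_add, map_sum, inner_self_eq_norm_sq, mul_sum, inner_re_symm (v _) (v (_ + _))]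
  congr 1
  refine sum_congr rfl fun h _ => sum_congr rfl fun n _ => by ring

theorem norm_sum_range_sq_le_sum_norm_sq_add (v : ℕ → E) (N : ℕ) :
    ‖∑ n ∈ range N, v n‖ ^ 2 ≤ ∑ n ∈ range N, ‖v n‖ ^ 2 +
      2 * ∑ h ∈ Icc 1 (N - 1), ‖∑ n ∈ range (N - h), ⟪v (n + h), v n⟫_𝕜‖ := by
  rw [norm_sum_range_sq_eq_sum_norm_sq_add (𝕜 := 𝕜)]
  gcongr with h
  exact RCLike.re_le_norm _

end

theorem norm_sum_range_mul_pow_sq_le {𝕜 : Type*} [RCLike 𝕜] (u : ℕ → 𝕜) {ζ : 𝕜} (hζ : ‖ζ‖ = 1)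
    (N : ℕ) :
    ‖∑ n ∈ range N, u n * ζ ^ n‖ ^ 2 ≤ ∑ n ∈ range N, ‖u n‖ ^ 2 +
      2 * ∑ h ∈ Icc 1 (N - 1), ‖∑ n ∈ range (N - h), conj (u (n + h)) * u n‖ := by
  have hconj : conj ζ * ζ = 1 := by rw [RCLike.conj_mul, hζ]; simp
  have hinner (h n : ℕ) :
      ⟪u (n + h) * ζ ^ (n + h), u n * ζ ^ n⟫_𝕜 = conj (u (n + h)) * u n * conj ζ ^ h := by
    simp only [RCLike.inner_apply, map_mul, map_pow, pow_add]
    linear_combination (u n * conj (u (n + h)) * conj ζ ^ h) * congrArg (· ^ n) hconj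
  calc ‖∑ n ∈ range N, u n * ζ ^ n‖ ^ 2
      ≤ ∑ n ∈ range N, ‖u n * ζ ^ n‖ ^ 2 + 2 * ∑ h ∈ Icc 1 (N - 1),
          ‖∑ n ∈ range (N - h), ⟪u (n + h) * ζ ^ (n + h), u n * ζ ^ n⟫_𝕜‖ :=
        norm_sum_range_sq_le_sum_norm_sq_add (fun n => u n * ζ ^ n) N
    _ = _ := by
        simp only [hinner, ← sum_mul, norm_mul, norm_pow, RCLike.norm_conj, hζ, one_pow, mul_one]

/-- Summation (unnormalized) variant of the Van der Corput estimate. -/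
theorem vdc_summation (N : ℕ) (u : ℕ → ℂ) :
    (⨆ t : ℝ, ‖∑ n ∈ range N,
        u n * Complex.exp (2 * (Real.pi : ℂ) * Complex.I * (n : ℂ) * (t : ℂ))‖ ^ 2) ≤
      2 * ∑ n ∈ range N, ‖u n‖ ^ 2 +
        4 * ∑ h ∈ Icc 1 (N - 1),
          ‖∑ n ∈ range (N - h), (starRingEnd ℂ) (u (n + h)) * u n‖ := by
  refine ciSup_le fun t => ?_
  set ζ := Complex.exp (2 * Real.pi * t * Complex.I)
  have hζ : ‖ζ‖ = 1 := by
    simpa using Complex.norm_exp_ofReal_mul_I (2 * Real.pi * t)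
  have hpow (n : ℕ) : Complex.exp (2 * Real.pi * Complex.I * n * t) = ζ ^ n := by
    rw [← Complex.exp_nat_mul]; ring_nf
  simp only [hpow]
  have hdiag := sum_nonneg fun n (_ : n ∈ range N) => sq_nonneg ‖u n‖
  have hlag := sum_nonneg fun h (_ : h ∈ Icc 1 (N - 1)) =>
    norm_nonneg (∑ n ∈ range (N - h), (starRingEnd ℂ) (u (n + h)) * u n)
  linarith [norm_sum_range_mul_pow_sq_le u hζ N]
end

section
/- Let $(X,\mathcal{F},\mu,T)$ be an invertible measure-preserving probability system and let $f_1, f_2 \in L^\infty(\mu)$ with $\Vert f_1\Vert_\infty \le 1$, $\Vert f_2\Vert_\infty \le 1$. Let $a_1, a_2$ be distinct nonzero integers, $N \in \mathbb{N}$, and $1 \le N_1 \le N$ an integer. Then for every $x \in X$, $\sum_{k=1}^{N_1}\left|\frac{1}{N}\sum_{n=1}^N f_1(T^{a_1 n}x)\,f_2(T^{a_2 n + (a_2-a_1)k}x)\right|^2 \le 2N\,(2|a_2|+|a_1|+1)\left(\sup_{t\in\mathbb{R}}\left|\frac{1}{N}\sum_{n=1}^N e^{2\pi i n t} f_1(T^{a_1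 n}x)\right|\right)^2$. -/
/-!
Put `L = 2N(|a₂| + |a₂ - a₁|) + 1` and work in `ZMod L`: the indices `a₂ n + (a₂ - a₁) k`
(`n, k ≤ N`) are represented faithfully there and the shifts `(a₂ - a₁) k` stay distinct.
Let `Φ` be `f₂` along the orbit of `x` and `P j = ∑ₙ e(a₂ n j / L) f₁(T^{a₁ n} x)`; being a
Wiener–Wintner sum, `‖P j‖ ≤ N C` with `C` the supremum on the right. The `k`-th correlation sum is
`L⁻¹` times the discrete Fourier coefficient of `P · 𝓕 Φ` at `-(a₂ - a₁) k`, so Bessel's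
inequality (a sub-sum of Parseval) bounds the sum of their squares by
`L⁻¹ ∑ⱼ ‖P j‖² ‖𝓕 Φ j‖² ≤ (N C)² ∑ ‖Φ‖² ≤ (N C)² L`.
-/

open Finset MeasureTheory

/-- Iteration of an invertible map indexed by integers. -/
noncomputable def zpowIter {X : Type*} (T Tinv : X → X) (m : ℤ) : X → X :=
  if 0 ≤ m then T^[m.toNat] else Tinv^[(-m).toNat]

open ComplexConjugate

namespace ZMod

variable {L : ℕ} [NeZero L]

lemma sum_dft_mul_dft (Φ Ψ : ZMod L → ℂ) :
    ∑ r, 𝓕 Φ r * 𝓕 Ψ r = L * ∑ j, Φ j * Ψ (-j) := by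
  calc ∑ r, 𝓕 Φ r * 𝓕 Ψ r = ∑ j, Φ j * 𝓕 (𝓕 Ψ) j := by
        simp only [dft_apply Φ, dft_apply (𝓕 Ψ), smul_eq_mul, sum_mul, mul_sum]
        rw [sum_comm]
        exact sum_congr rfl fun j _ ↦ sum_congr rfl fun r _ ↦ by rw [mul_comm r j]; ring
    _ = L * ∑ j, Φ j * Ψ (-j) := by
        simp only [dft_dft, smul_eq_mul, mul_sum]
        exact sum_congr rfl fun j _ ↦ by ring

lemma dft_conj_comp_neg (Φ : ZMod L → ℂ) (r : ZMod L) :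
    𝓕 (fun j ↦ conj (Φ (-j))) r = conj (𝓕 Φ r) := by
  simp only [dft_apply, smul_eq_mul, map_sum, map_mul, ← AddChar.map_neg_eq_conj]
  exact Fintype.sum_equiv (Equiv.neg _) _ _ fun j ↦ by simp

theorem sum_norm_sq_dft (Φ : ZMod L → ℂ) :
    ∑ r, ‖𝓕 Φ r‖ ^ 2 = L * ∑ j, ‖Φ j‖ ^ 2 := by
  have h := sum_dft_mul_dft Φ fun j ↦ conj (Φ (-j))
  simp only [dft_conj_comp_neg, neg_neg, Complex.mul_conj, Complex.normSq_eq_norm_sq] at h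
  exact_mod_cast h

lemma dft_stdAddChar_mul (a : ZMod L) (Φ : ZMod L → ℂ) (r : ZMod L) :
    𝓕 (fun j ↦ stdAddChar (a * j) * Φ j) r = 𝓕 Φ (r - a) := by
  simp only [dft_apply, smul_eq_mul, ← mul_assoc, ← AddChar.map_add_eq_mul]
  exact sum_congr rfl fun j _ ↦ by ring_nf

lemma dft_sum_stdAddChar_mul_dft {ι : Type*} (A : Finset ι) (α : ι → ZMod L) (c : ι → ℂ)
    (Φ : ZMod L → ℂ) (r : ZMod L) :
    𝓕 (fun j ↦ (∑ i ∈ A, stdAddChar (α i * j) * c i) * 𝓕 Φ j) r =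
      L * ∑ i ∈ A, c i * Φ (α i - r) := by
  have h : (fun j ↦ (∑ i ∈ A, stdAddChar (α i * j) * c i) * 𝓕 Φ j) =
      ∑ i ∈ A, c i • fun j ↦ stdAddChar (α i * j) * 𝓕 Φ j := by
    ext j
    simp only [sum_mul, Finset.sum_apply, Pi.smul_apply, smul_eq_mul]
    exact sum_congr rfl fun i _ ↦ by ring
  rw [h, map_sum, Finset.sum_apply, mul_sum]
  refine sum_congr rfl fun i _ ↦ ?_
  rw [LinearEquiv.map_smul, Pi.smul_apply, dft_stdAddChar_mul, dft_dft]
  simp only [smul_eq_mul, neg_sub]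
  ring

theorem sum_norm_sq_sum_mul_shift_le {ι κ : Type*} (A : Finset ι) (K : Finset κ)
    (α : ι → ZMod L) (β : κ → ZMod L) (hβ : Set.InjOn β K) (c : ι → ℂ) (Φ : ZMod L → ℂ)
    (B : ℝ) (hB : ∀ j, ‖∑ i ∈ A, stdAddChar (α i * j) * c i‖ ≤ B) :
    ∑ k ∈ K, ‖∑ i ∈ A, c i * Φ (α i + β k)‖ ^ 2 ≤ B ^ 2 * ∑ ξ, ‖Φ ξ‖ ^ 2 := by
  set G : ZMod L → ℂ := fun j ↦ (∑ i ∈ A, stdAddChar (α i * j) * c i) * 𝓕 Φ j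
  have hL : (0 : ℝ) < L := by simp [Nat.pos_of_neZero L]
  have hG : ∀ k, 𝓕 G (-β k) = L * ∑ i ∈ A, c i * Φ (α i + β k) := fun k ↦ by
    simp only [G, dft_sum_stdAddChar_mul_dft, sub_neg_eq_add]
  have hneg : Set.InjOn (fun k ↦ -β k) K := fun k hk k' hk' h ↦ hβ hk hk' (neg_inj.mp h)
  suffices (L : ℝ) ^ 2 * ∑ k ∈ K, ‖∑ i ∈ A, c i * Φ (α i + β k)‖ ^ 2 ≤
      L ^ 2 * (B ^ 2 * ∑ ξ, ‖Φ ξ‖ ^ 2) from le_of_mul_le_mul_left this (by positivity)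
  calc (L : ℝ) ^ 2 * ∑ k ∈ K, ‖∑ i ∈ A, c i * Φ (α i + β k)‖ ^ 2
      = ∑ r ∈ K.image (fun k ↦ -β k), ‖𝓕 G r‖ ^ 2 := by
        rw [sum_image hneg, mul_sum]
        refine sum_congr rfl fun k _ ↦ ?_
        rw [hG, norm_mul, mul_pow, Complex.norm_natCast]
    _ ≤ ∑ r, ‖𝓕 G r‖ ^ 2 := sum_le_univ_sum_of_nonneg fun _ ↦ by positivity
    _ = L * ∑ j, ‖G j‖ ^ 2 := sum_norm_sq_dft G
    _ ≤ L * ∑ j, B ^ 2 * ‖𝓕 Φ j‖ ^ 2 := by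
        gcongr with j
        rw [norm_mul, mul_pow]
        gcongr
        exact hB j
    _ = L ^ 2 * (B ^ 2 * ∑ ξ, ‖Φ ξ‖ ^ 2) := by
        rw [← mul_sum, sum_norm_sq_dft]
        ring

lemma valMinAbs_intCast_of_two_mul_abs_lt {n : ℕ} [NeZero n] {m : ℤ} (h : 2 * |m| < n) :
    (m : ZMod n).valMinAbs = m := by
  rw [valMinAbs_spec]
  exact ⟨rfl, by linarith [neg_abs_le m], by linarith [le_abs_self m]⟩

lemma injOn_intCast_mul {n : ℕ} {d : ℤ} (hd : d ≠ 0) {K : ℕ} (hK : |d| * K < n) :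
    Set.InjOn (fun k : ℕ ↦ ((d * k : ℤ) : ZMod n)) (Icc 1 K) := by
  intro k hk k' hk' h
  simp only [coe_Icc, Set.mem_Icc] at hk hk'
  have hdvd : (n : ℤ) ∣ d * (k - k') := by
    rw [← intCast_zmod_eq_zero_iff_dvd]
    push_cast at h ⊢
    rw [mul_sub, h, sub_self]
  have hlt : |d * (k - k')| < n := by
    rw [abs_mul]
    refine lt_of_le_of_lt (mul_le_mul_of_nonneg_left ?_ (abs_nonneg d)) hK
    rw [abs_le]; constructor <;> omega
  have := Int.eq_zero_of_abs_lt_dvd hdvd hlt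
  rcases mul_eq_zero.mp this with h0 | h0
  · exact absurd h0 hd
  · omega

lemma stdAddChar_intCast_mul {n : ℕ} [NeZero n] (m : ℤ) (j : ZMod n) :
    stdAddChar ((m : ZMod n) * j) =
      Complex.exp (2 * Real.pi * Complex.I * m * (j.val / n : ℝ)) := by
  have h : (m : ZMod n) * j = ((m * j.val : ℤ) : ZMod n) := by
    push_cast
    rw [natCast_zmod_val]
  rw [h, stdAddChar_coe]
  congr 1
  push_cast
  ring

end ZMod

open ZMod in
theorem sum_norm_sq_sum_mul_shift_le_of_expSum_le (c : ℕ → ℂ) (F : ℤ → ℂ) (hF : ∀ m, ‖F m‖ ≤ 1)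
    (a d : ℤ) (hd : d ≠ 0) (N N₁ : ℕ) (hN : N₁ ≤ N) (B : ℝ)
    (hB : ∀ t : ℝ, ‖∑ n ∈ Icc 1 N, Complex.exp (2 * Real.pi * Complex.I * n * t) * c n‖ ≤ B) :
    ∑ k ∈ Icc 1 N₁, ‖∑ n ∈ Icc 1 N, c n * F (a * n + d * k)‖ ^ 2 ≤
      B ^ 2 * (2 * N * (|(a : ℝ)| + |(d : ℝ)|) + 1) := by
  set M : ℕ := N * (a.natAbs + d.natAbs)
  set L := 2 * M + 1
  have hM : (M : ℤ) = N * (|a| + |d|) := by simp [M]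
  have hLR : (L : ℝ) = 2 * N * (|(a : ℝ)| + |(d : ℝ)|) + 1 := by
    push_cast [L, M, Nat.cast_natAbs]
    ring
  have : NeZero L := ⟨Nat.succ_ne_zero _⟩
  have hrange : ∀ n ∈ Icc 1 N, ∀ k ∈ Icc 1 N₁, |a * n + d * k| ≤ M := by
    intro n hn k hk
    simp only [mem_Icc] at hn hk
    calc |a * n + d * k| ≤ |a| * n + |d| * k := by
          refine (abs_add_le _ _).trans ?_
          rw [abs_mul, abs_mul, Nat.abs_cast, Nat.abs_cast]
      _ ≤ |a| * N + |d| * N := by gcongr <;> omega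
      _ = M := by rw [hM]; ring
  have hinj : Set.InjOn (fun k : ℕ ↦ ((d * k : ℤ) : ZMod L)) (Icc 1 N₁) := by
    refine injOn_intCast_mul hd ?_
    calc |d| * N₁ ≤ |d| * N := by gcongr
      _ ≤ M := by rw [hM]; nlinarith [abs_nonneg a, abs_nonneg d]
      _ < L := by omega
  have hP : ∀ j : ZMod L, ‖∑ n ∈ Icc 1 N, stdAddChar (((a * n : ℤ) : ZMod L) * j) * c n‖ ≤ B := by
    intro j
    convert hB (a * j.val / L) using 3 with n
    rw [stdAddChar_intCast_mul]
    congr 2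
    push_cast
    ring
  calc ∑ k ∈ Icc 1 N₁, ‖∑ n ∈ Icc 1 N, c n * F (a * n + d * k)‖ ^ 2
      = ∑ k ∈ Icc 1 N₁, ‖∑ n ∈ Icc 1 N,
          c n * F (((a * n : ℤ) : ZMod L) + ((d * k : ℤ) : ZMod L)).valMinAbs‖ ^ 2 := by
        refine sum_congr rfl fun k hk ↦ congrArg (‖·‖ ^ 2) (sum_congr rfl fun n hn ↦ ?_)
        rw [← Int.cast_add, valMinAbs_intCast_of_two_mul_abs_lt
          (by push_cast [L]; linarith [hrange n hn k hk])]
    _ ≤ B ^ 2 * ∑ ξ : ZMod L, ‖F ξ.valMinAbs‖ ^ 2 :=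
        sum_norm_sq_sum_mul_shift_le _ _ (fun n : ℕ ↦ ((a * n : ℤ) : ZMod L)) _ hinj c
          (fun ξ ↦ F ξ.valMinAbs) B hP
    _ ≤ B ^ 2 * ∑ _ξ : ZMod L, 1 := by
        gcongr with ξ
        exact pow_le_one₀ (norm_nonneg _) (hF _)
    _ = B ^ 2 * (2 * N * (|(a : ℝ)| + |(d : ℝ)|) + 1) := by simp [← hLR]

lemma norm_expSum_le_mul_iSup (c : ℕ → ℂ) (N : ℕ) (t : ℝ) :
    ‖∑ n ∈ Icc 1 N, Complex.exp (2 * Real.pi * Complex.I * n * t) * c n‖ ≤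
      N * ⨆ s : ℝ,
        ‖(N : ℂ)⁻¹ * ∑ n ∈ Icc 1 N, Complex.exp (2 * Real.pi * Complex.I * n * s) * c n‖ := by
  rcases N.eq_zero_or_pos with rfl | hN
  · simp
  have hbdd : BddAbove (Set.range fun s : ℝ ↦
      ‖(N : ℂ)⁻¹ * ∑ n ∈ Icc 1 N, Complex.exp (2 * Real.pi * Complex.I * n * s) * c n‖) := by
    refine ⟨‖(N : ℂ)⁻¹‖ * ∑ n ∈ Icc 1 N, ‖c n‖, ?_⟩
    rintro _ ⟨s, rfl⟩
    dsimp only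
    rw [norm_mul]
    gcongr
    refine (norm_sum_le _ _).trans (sum_le_sum fun n _ ↦ ?_)
    simp [Complex.norm_exp]
  have hN' : (N : ℂ) ≠ 0 := by exact_mod_cast hN.ne'
  calc ‖∑ n ∈ Icc 1 N, Complex.exp (2 * Real.pi * Complex.I * n * t) * c n‖
      = N * ‖(N : ℂ)⁻¹ * ∑ n ∈ Icc 1 N, Complex.exp (2 * Real.pi * Complex.I * n * t) * c n‖ := by
        rw [← Complex.norm_natCast, ← norm_mul, mul_inv_cancel_left₀ hN']
    _ ≤ _ := by gcongr; exact le_ciSup hbdd t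

theorem bessel_double_recurrence_general (X : Type*) (T Tinv : X → X)
    (f₁ f₂ : X → ℂ) (hb2 : ∀ x, ‖f₂ x‖ ≤ 1)
    (a₁ a₂ : ℤ) (h12 : a₁ ≠ a₂)
    (N N₁ : ℕ) (hN : N₁ ≤ N) (x : X) :
    ∑ k ∈ Icc 1 N₁, ‖((N : ℂ)⁻¹ * ∑ n ∈ Icc 1 N,
        f₁ (zpowIter T Tinv (a₁ * n) x) *
          f₂ (zpowIter T Tinv (a₂ * n + (a₂ - a₁) * k) x))‖ ^ 2 ≤
      2 * (N : ℝ) * (2 * |(a₂ : ℝ)| + |(a₁ : ℝ)| + 1) *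
        (⨆ t : ℝ, ‖((N : ℂ)⁻¹ * ∑ n ∈ Icc 1 N,
          Complex.exp (2 * (Real.pi : ℂ) * Complex.I * (n : ℂ) * (t : ℂ)) *
            f₁ (zpowIter T Tinv (a₁ * n) x))‖) ^ 2 := by
  rcases N.eq_zero_or_pos with rfl | hN0
  · obtain rfl : N₁ = 0 := by omega
    simp
  set C := ⨆ t : ℝ, ‖((N : ℂ)⁻¹ * ∑ n ∈ Icc 1 N,
    Complex.exp (2 * (Real.pi : ℂ) * Complex.I * (n : ℂ) * (t : ℂ)) *
      f₁ (zpowIter T Tinv (a₁ * n) x))‖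
  have key := sum_norm_sq_sum_mul_shift_le_of_expSum_le (fun n ↦ f₁ (zpowIter T Tinv (a₁ * n) x))
    (fun m ↦ f₂ (zpowIter T Tinv m x)) (fun _ ↦ hb2 _) a₂ (a₂ - a₁) (sub_ne_zero.mpr h12.symm)
    N N₁ hN (N * C) (norm_expSum_le_mul_iSup _ N)
  have hd : |((a₂ - a₁ : ℤ) : ℝ)| ≤ |(a₂ : ℝ)| + |(a₁ : ℝ)| := by
    push_cast; exact abs_sub _ _
  have hN1 : (1 : ℝ) ≤ N := by exact_mod_cast hN0
  simp only [norm_mul, mul_pow, ← mul_sum, norm_inv, Complex.norm_natCast]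
  calc ((N : ℝ)⁻¹) ^ 2 * ∑ k ∈ Icc 1 N₁, ‖∑ n ∈ Icc 1 N, f₁ (zpowIter T Tinv (a₁ * n) x) *
          f₂ (zpowIter T Tinv (a₂ * n + (a₂ - a₁) * k) x)‖ ^ 2
      ≤ ((N : ℝ)⁻¹) ^ 2 * ((N * C) ^ 2 * (2 * N * (|(a₂ : ℝ)| + |((a₂ - a₁ : ℤ) : ℝ)|) + 1)) :=
        mul_le_mul_of_nonneg_left key (by positivity)
    _ = C ^ 2 * (2 * N * (|(a₂ : ℝ)| + |((a₂ - a₁ : ℤ) : ℝ)|) + 1) := by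
        field_simp
    _ ≤ _ := by
        rw [mul_comm]
        gcongr
        nlinarith

/-- The Bessel-inequality step in Bourgain's double recurrence bound: the shifted double
recurrence averages at a point `x` are square-summable, with bound given by the
Wiener–Wintner maximal average of `f₁` along the `a₁`-orbit of `x`. -/
theorem bessel_double_recurrence (X : Type*) [MeasurableSpace X] (μ : Measure X)
    [IsProbabilityMeasure μ] (T Tinv : X → X) (hT : MeasurePreserving T μ μ)
    (hTl : Function.LeftInverse Tinv T) (hTr : Function.RightInverse Tinv T)
    (f₁ f₂ : X → ℂ) (hb1 : ∀ x, ‖f₁ x‖ ≤ 1) (hb2 : ∀ x, ‖f₂ x‖ ≤ 1)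
    (a₁ a₂ : ℤ) (h12 : a₁ ≠ a₂) (h1 : a₁ ≠ 0) (h2 : a₂ ≠ 0)
    (N N₁ : ℕ) (hN₁ : 1 ≤ N₁) (hN : N₁ ≤ N) (x : X) :
    ∑ k ∈ Icc 1 N₁, ‖((N : ℂ)⁻¹ * ∑ n ∈ Icc 1 N,
        f₁ (zpowIter T Tinv (a₁ * n) x) *
          f₂ (zpowIter T Tinv (a₂ * n + (a₂ - a₁) * k) x))‖ ^ 2 ≤
      2 * (N : ℝ) * (2 * |(a₂ : ℝ)| + |(a₁ : ℝ)| + 1) *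
        (⨆ t : ℝ, ‖((N : ℂ)⁻¹ * ∑ n ∈ Icc 1 N,
          Complex.exp (2 * (Real.pi : ℂ) * Complex.I * (n : ℂ) * (t : ℂ)) *
            f₁ (zpowIter T Tinv (a₁ * n) x))‖) ^ 2 :=
  bessel_double_recurrence_general X T Tinv f₁ f₂ hb2 a₁ a₂ h12 N N₁ hN x
end

section
/- Let $(X, \mathcal{F}, \mu, T)$ be a measure-preserving probability system, $g \in L^\infty(\mu)$ with $\Vert g\Vert_\infty \le 1$, and $N \ge 1$ an integer. Then $\left\Vert \sup_{t\in\mathbb{R}}\left|\frac{1}{N}\sum_{n=1}^N e^{2\pi i n t}\, g\circ T^n\right|\right\Vert_2 \;\le\; \left\Vert \sup_{t\in\mathbb{R}}\left|\frac{1}{\lfloor\sqrt{N}\rfloor}\sum_{n=1}^{\lfloor\sqrt{N}\rfloor} e^{2\pi i n t}\, g\circ T^n\right|\right\Vert_2 + \frac{2}{\sqrt{N}}$. -/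
/-!
Split `∑_{n=1}^N` at `K² ≤ N`, where `K = ⌊√N⌋`. The tail has at most `N - K² ≤ 2K` terms of
modulus `≤ 1`, so it contributes at most `2K/N ≤ 2/√N`. The head `∑_{n=1}^{K²}` is a sum of `K`
blocks of length `K`; the `j`-th block is `e(jKt)` times the length-`K` sum at the point
`T^{jK} x`, so the normalized maximal function over `N` terms is pointwise at most the average over
`j < K` of the maximal function over `K` terms at `T^{jK} x`, plus `2/√N`. Since `T^{jK}`
preserves `μ`, each term of that average has the same `L²` norm, and the triangle inequality
in `L²` concludes.
-/

open Finset MeasureTheory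

theorem Nat.Icc_one_eq_Ioc_zero (n : ℕ) : Icc 1 n = Ioc 0 n :=
  Icc_add_one_left_eq_Ioc 0 n

theorem Nat.sub_sqrt_mul_sqrt_le (N : ℕ) : N - N.sqrt * N.sqrt ≤ 2 * N.sqrt := by
  have := Nat.sqrt_le_add N
  omega

theorem Nat.sqrt_div_le_inv_sqrt (N : ℕ) : (N.sqrt : ℝ) / N ≤ (N.sqrt : ℝ)⁻¹ := by
  rcases N.eq_zero_or_pos with rfl | hN
  · simp
  rw [div_le_iff₀ (by positivity), inv_mul_eq_div, le_div_iff₀ (by positivity [Nat.sqrt_pos.2 hN])]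
  exact_mod_cast Nat.sqrt_le N

theorem Nat.sqrt_div_le_inv_real_sqrt (N : ℕ) : (N.sqrt : ℝ) / N ≤ (√N)⁻¹ :=
  calc (N.sqrt : ℝ) / N ≤ √N / N := by gcongr; exact Real.nat_sqrt_le_real_sqrt
    _ = (√N)⁻¹ := Real.sqrt_div_self

theorem Finset.sum_Icc_mul_eq_sum_range_sum_Icc {M : Type*} [AddCommMonoid M] (f : ℕ → M)
    (a b : ℕ) :
    ∑ n ∈ Icc 1 (a * b), f n = ∑ j ∈ range a, ∑ m ∈ Icc 1 b, f (j * b + m) := by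
  induction a with
  | zero => simp
  | succ a ih =>
    rw [sum_range_succ, ← ih, Nat.succ_mul, Nat.Icc_one_eq_Ioc_zero, Nat.Icc_one_eq_Ioc_zero,
      Nat.Icc_one_eq_Ioc_zero, ← sum_Ioc_consecutive f (Nat.zero_le _) (Nat.le_add_right _ b)]
    congr 1
    simpa using sum_map (Ioc 0 b) (addLeftEmbedding (a * b)) f

namespace MeasureTheory

variable {X E : Type*} [MeasurableSpace X] {μ : Measure X} [NormedAddCommGroup E] {p : ENNReal}

theorem eLpNorm_add_const_le [IsProbabilityMeasure μ] {f : X → E}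
    (hf : AEStronglyMeasurable f μ) (c : E) (hp : 1 ≤ p) :
    eLpNorm (fun x => f x + c) p μ ≤ eLpNorm f p μ + ‖c‖ₑ := by
  calc eLpNorm (fun x => f x + c) p μ ≤ eLpNorm f p μ + eLpNorm (fun _ => c) p μ :=
        eLpNorm_add_le hf aestronglyMeasurable_const hp
    _ = eLpNorm f p μ + ‖c‖ₑ := by
        rw [eLpNorm_const _ (by positivity) (IsProbabilityMeasure.ne_zero μ)]
        simp

theorem eLpNorm_average_comp_le [NormedSpace ℝ E] {ι : Type*} {f : X → E}
    (hf : AEStronglyMeasurable f μ) (s : Finset ι) {φ : ι → X → X}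
    (hφ : ∀ i ∈ s, MeasurePreserving (φ i) μ μ) (hp : 1 ≤ p) :
    eLpNorm (fun x => (#s : ℝ)⁻¹ • ∑ i ∈ s, f (φ i x)) p μ ≤ eLpNorm f p μ := by
  have hcomp : ∀ i ∈ s, eLpNorm (f ∘ φ i) p μ = eLpNorm f p μ := fun i hi =>
    eLpNorm_comp_measurePreserving hf (hφ i hi)
  have hcard : ‖(#s : ℝ)⁻¹‖ₑ * #s ≤ 1 := by
    rcases (#s).eq_zero_or_pos with h | h
    · simp [h]
    rw [enorm_inv (by positivity), Real.enorm_natCast]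
    exact ENNReal.inv_mul_le_one _
  calc eLpNorm (fun x => (#s : ℝ)⁻¹ • ∑ i ∈ s, f (φ i x)) p μ
      = ‖(#s : ℝ)⁻¹‖ₑ * eLpNorm (∑ i ∈ s, f ∘ φ i) p μ := by
        rw [← eLpNorm_const_smul]
        congr 1
        ext x
        simp [Finset.sum_apply]
    _ ≤ ‖(#s : ℝ)⁻¹‖ₑ * ∑ i ∈ s, eLpNorm (f ∘ φ i) p μ := by
        gcongr
        exact eLpNorm_sum_le (fun i hi => hf.comp_measurePreserving (hφ i hi)) hp
    _ = ‖(#s : ℝ)⁻¹‖ₑ * #s * eLpNorm f p μ := by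
        rw [sum_congr rfl hcomp, sum_const, nsmul_eq_mul, mul_assoc]
    _ ≤ eLpNorm f p μ := mul_le_of_le_one_left' hcard

end MeasureTheory

namespace WienerWintner

noncomputable def phase (n : ℕ) (t : ℝ) : ℂ :=
  Complex.exp (2 * (Real.pi : ℂ) * Complex.I * (n : ℂ) * (t : ℂ))

theorem norm_phase (n : ℕ) (t : ℝ) : ‖phase n t‖ = 1 := by
  rw [phase, show 2 * (Real.pi : ℂ) * Complex.I * n * t
    = ((2 * Real.pi * n * t : ℝ) : ℂ) * Complex.I by push_cast; ring]
  exact Complex.norm_exp_ofReal_mul_I _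

theorem phase_add (a b : ℕ) (t : ℝ) : phase (a + b) t = phase a t * phase b t := by
  simp only [phase, ← Complex.exp_add]
  push_cast
  ring_nf

variable {X : Type*} (T : X → X) (g : X → ℂ)

noncomputable def phaseSum (M : ℕ) (x : X) (t : ℝ) : ℂ :=
  ∑ n ∈ Icc 1 M, phase n t * g (T^[n] x)

noncomputable def maximalAverage (M : ℕ) (x : X) : ℝ :=
  ⨆ t : ℝ, ‖(M : ℂ)⁻¹ * phaseSum T g M x t‖

variable {T g}

theorem maximalAverage_nonneg (M : ℕ) (x : X) : 0 ≤ maximalAverage T g M x :=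
  Real.iSup_nonneg fun _ => norm_nonneg _

theorem measurable_maximalAverage [MeasurableSpace X] (hT : Measurable T) (hg : Measurable g)
    (M : ℕ) : Measurable (maximalAverage T g M) := by
  have hcont : ∀ x, Continuous fun t => ‖(M : ℂ)⁻¹ * phaseSum T g M x t‖ := fun x => by
    unfold phaseSum phase
    fun_prop
  have : Countable (Set.range ((↑) : ℚ → ℝ)) := (Set.countable_range _).to_subtype
  have hrat : maximalAverage T g M =
      fun x => ⨆ s : Set.range ((↑) : ℚ → ℝ), ‖(M : ℂ)⁻¹ * phaseSum T g M x s‖ :=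
    funext fun x => (Rat.denseRange_cast.ciSup' (hcont x)).symm
  rw [hrat]
  refine Measurable.iSup fun s => ?_
  unfold phaseSum
  fun_prop

theorem sum_Icc_phase_mul_add (K a : ℕ) (x : X) (t : ℝ) :
    ∑ m ∈ Icc 1 K, phase (a + m) t * g (T^[a + m] x) = phase a t * phaseSum T g K (T^[a] x) t := by
  rw [phaseSum, mul_sum]
  refine sum_congr rfl fun m _ => ?_
  rw [phase_add, add_comm a m, Function.iterate_add_apply]
  ring

theorem norm_sum_phase_mul_le_card (hg : ∀ x, ‖g x‖ ≤ 1) (s : Finset ℕ) (x : X) (t : ℝ) :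
    ‖∑ n ∈ s, phase n t * g (T^[n] x)‖ ≤ #s :=
  calc ‖∑ n ∈ s, phase n t * g (T^[n] x)‖ ≤ ∑ n ∈ s, ‖phase n t * g (T^[n] x)‖ := norm_sum_le _ _
    _ ≤ ∑ _n ∈ s, (1 : ℝ) := by
        gcongr with n
        rw [norm_mul, norm_phase, one_mul]
        exact hg _
    _ = #s := by simp

theorem norm_phaseSum_le_add_of_le (hg : ∀ x, ‖g x‖ ≤ 1) {M N : ℕ} (hMN : M ≤ N) (x : X) (t : ℝ) :
    ‖phaseSum T g N x t‖ ≤ ‖phaseSum T g M x t‖ + (N - M : ℕ) := by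
  rw [phaseSum, phaseSum, Nat.Icc_one_eq_Ioc_zero, Nat.Icc_one_eq_Ioc_zero,
    ← sum_Ioc_consecutive _ (Nat.zero_le M) hMN]
  refine (norm_add_le _ _).trans (add_le_add_right ?_ _)
  simpa using norm_sum_phase_mul_le_card hg (Ioc M N) x t

theorem norm_phaseSum_le_mul_maximalAverage (hg : ∀ x, ‖g x‖ ≤ 1) (M : ℕ) (x : X) (t : ℝ) :
    ‖phaseSum T g M x t‖ ≤ M * maximalAverage T g M x := by
  rcases M.eq_zero_or_pos with rfl | hM
  · simp [phaseSum]
  have hbdd : BddAbove (Set.range fun t => ‖(M : ℂ)⁻¹ * phaseSum T g M x t‖) := by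
    refine ⟨1, Set.forall_mem_range.2 fun t => ?_⟩
    rw [norm_mul, norm_inv, Complex.norm_natCast]
    refine inv_mul_le_one_of_le₀ ?_ M.cast_nonneg
    simpa [phaseSum] using norm_sum_phase_mul_le_card hg (Icc 1 M) x t
  calc ‖phaseSum T g M x t‖ = M * ‖(M : ℂ)⁻¹ * phaseSum T g M x t‖ := by
        rw [norm_mul, norm_inv, Complex.norm_natCast, mul_inv_cancel_left₀ (by positivity)]
    _ ≤ M * maximalAverage T g M x := by
        gcongr
        exact le_ciSup hbdd t

theorem norm_phaseSum_mul_self_le (hg : ∀ x, ‖g x‖ ≤ 1) (K : ℕ) (x : X) (t : ℝ) :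
    ‖phaseSum T g (K * K) x t‖ ≤ K * ∑ j ∈ range K, maximalAverage T g K (T^[j * K] x) := by
  rw [phaseSum, sum_Icc_mul_eq_sum_range_sum_Icc, mul_sum]
  refine (norm_sum_le _ _).trans (sum_le_sum fun j _ => ?_)
  rw [sum_Icc_phase_mul_add, norm_mul, norm_phase, one_mul]
  exact norm_phaseSum_le_mul_maximalAverage hg K _ t

theorem maximalAverage_le_average_add (hg : ∀ x, ‖g x‖ ≤ 1) (N : ℕ) (x : X) :
    maximalAverage T g N x ≤ (N.sqrt : ℝ)⁻¹ *
      ∑ j ∈ range N.sqrt, maximalAverage T g N.sqrt (T^[j * N.sqrt] x) + 2 / √N := by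
  set K := N.sqrt
  set A := ∑ j ∈ range K, maximalAverage T g K (T^[j * K] x)
  have hA : 0 ≤ A := sum_nonneg fun _ _ => maximalAverage_nonneg _ _
  refine ciSup_le fun t => ?_
  calc ‖(N : ℂ)⁻¹ * phaseSum T g N x t‖ = (N : ℝ)⁻¹ * ‖phaseSum T g N x t‖ := by
        rw [norm_mul, norm_inv, Complex.norm_natCast]
    _ ≤ (N : ℝ)⁻¹ * (K * A + (N - K * K : ℕ)) := by
        gcongr
        exact (norm_phaseSum_le_add_of_le hg (Nat.sqrt_le N) x t).trans
          (add_le_add_left (norm_phaseSum_mul_self_le hg K x t) _)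
    _ ≤ (N : ℝ)⁻¹ * (K * A + 2 * K) := by
        gcongr
        exact_mod_cast Nat.sub_sqrt_mul_sqrt_le N
    _ = K / N * A + 2 * (K / N) := by ring
    _ ≤ (K : ℝ)⁻¹ * A + 2 * (√N)⁻¹ := by
        gcongr
        · exact Nat.sqrt_div_le_inv_sqrt N
        · exact Nat.sqrt_div_le_inv_real_sqrt N
    _ = (K : ℝ)⁻¹ * A + 2 / √N := by rw [div_eq_mul_inv]

end WienerWintner

open WienerWintner

theorem wiener_wintner_sqrt_reduction_general (X : Type*) [MeasurableSpace X] (μ : Measure X)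
    [IsProbabilityMeasure μ] (T : X → X) (hT : MeasurePreserving T μ μ)
    (g : X → ℂ) (hg : Measurable g) (hgb : ∀ x, ‖g x‖ ≤ 1)
    (N : ℕ) :
    eLpNorm (fun x => ⨆ t : ℝ, ‖((N : ℂ)⁻¹ * ∑ n ∈ Icc 1 N,
        Complex.exp (2 * (Real.pi : ℂ) * Complex.I * (n : ℂ) * (t : ℂ)) * g (T^[n] x))‖) 2 μ ≤
      eLpNorm (fun x => ⨆ t : ℝ, ‖((Nat.sqrt N : ℂ)⁻¹ * ∑ n ∈ Icc 1 (Nat.sqrt N),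
        Complex.exp (2 * (Real.pi : ℂ) * Complex.I * (n : ℂ) * (t : ℂ)) * g (T^[n] x))‖) 2 μ +
      ENNReal.ofReal (2 / Real.sqrt (N : ℝ)) := by
  set K := N.sqrt
  have hFK : Measurable (maximalAverage T g K) := measurable_maximalAverage hT.measurable hg K
  have hAvg : Measurable fun x => (K : ℝ)⁻¹ * ∑ j ∈ range K, maximalAverage T g K (T^[j * K] x) :=
    (Finset.measurable_sum _ fun j _ => hFK.comp (hT.measurable.iterate _)).const_mul _
  change eLpNorm (maximalAverage T g N) 2 μ ≤ eLpNorm (maximalAverage T g K) 2 μ + _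
  calc eLpNorm (maximalAverage T g N) 2 μ
      ≤ eLpNorm (fun x => (K : ℝ)⁻¹ * ∑ j ∈ range K, maximalAverage T g K (T^[j * K] x)
          + 2 / √N) 2 μ := eLpNorm_mono_real fun x => by
        rw [Real.norm_of_nonneg (maximalAverage_nonneg N x)]
        exact maximalAverage_le_average_add hgb N x
    _ ≤ eLpNorm (fun x => (K : ℝ)⁻¹ * ∑ j ∈ range K, maximalAverage T g K (T^[j * K] x)) 2 μ
          + ‖2 / √N‖ₑ := eLpNorm_add_const_le hAvg.aestronglyMeasurable _ one_le_two
    _ ≤ eLpNorm (maximalAverage T g K) 2 μ + ENNReal.ofReal (2 / √N) := by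
        rw [Real.enorm_of_nonneg (by positivity)]
        gcongr
        simpa using eLpNorm_average_comp_le hFK.aestronglyMeasurable (range K)
          (fun j _ => hT.iterate (j * K)) one_le_two

/-- The Wiener–Wintner maximal average over `N` terms (in `L²`) is bounded by the one over
`⌊√N⌋` terms, up to an error `2/√N`. -/
theorem wiener_wintner_sqrt_reduction (X : Type*) [MeasurableSpace X] (μ : Measure X)
    [IsProbabilityMeasure μ] (T : X → X) (hT : MeasurePreserving T μ μ)
    (g : X → ℂ) (hg : Measurable g) (hgb : ∀ x, ‖g x‖ ≤ 1)
    (N : ℕ) (hN : 1 ≤ N) :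
    eLpNorm (fun x => ⨆ t : ℝ, ‖((N : ℂ)⁻¹ * ∑ n ∈ Icc 1 N,
        Complex.exp (2 * (Real.pi : ℂ) * Complex.I * (n : ℂ) * (t : ℂ)) * g (T^[n] x))‖) 2 μ ≤
      eLpNorm (fun x => ⨆ t : ℝ, ‖((Nat.sqrt N : ℂ)⁻¹ * ∑ n ∈ Icc 1 (Nat.sqrt N),
        Complex.exp (2 * (Real.pi : ℂ) * Complex.I * (n : ℂ) * (t : ℂ)) * g (T^[n] x))‖) 2 μ +
      ENNReal.ofReal (2 / Real.sqrt (N : ℝ)) :=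
  wiener_wintner_sqrt_reduction_general X μ T hT g hg hgb N
end

section
/- Let $(X, \mathcal{F}, \mu, T)$ be a measure-preserving probability system, let $p \in (1, \infty)$, and let $f \in L^p(\mu)$ be real-valued. Then $\left\Vert \sup_{N \ge 1} \frac{1}{N}\sum_{n=1}^N f\circ T^n \right\Vert_p \le \frac{p}{p-1}\Vert f\Vert_p$. -/
/-!
For a nonnegative `g`, Garsia's maximal ergodic lemma applied to `g - t` gives the weak-type bound
`t μ{D_K > t} ≤ ∫_{D_K > t} g` for the truncated maximal average `D_K = max_{N ≤ K} A_{N+1} g`.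
Any such bound upgrades to `‖D_K‖_p ≤ p/(p-1) ‖g‖_p`: the layer-cake formula turns it into
`∫ D_K^p ≤ p/(p-1) ∫ g D_K^(p-1)`, Hölder bounds the right side by `‖g‖_p ‖D_K‖_p^(p-1)`, and
`‖D_K‖_p < ∞` lets us cancel. Finally take `g = |f ∘ T|` (the averages in the statement start at
`n = 1`), use `|A_N f| ≤ A_N |f|`, and let `K → ∞` by monotone convergence.
-/

open Finset MeasureTheory
open scoped ENNReal

theorem ENNReal.le_of_rpow_le_mul_rpow_sub_one {a b : ℝ≥0∞} {p : ℝ} (hp : 1 < p) (ha : a ≠ ∞)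
    (h : a ^ p ≤ b * a ^ (p - 1)) : a ≤ b := by
  rcases eq_or_ne a 0 with rfl | ha0
  · exact bot_le
  have hsplit : a ^ p = a * a ^ (p - 1) := by
    simpa using ENNReal.rpow_add 1 (p - 1) ha0 ha
  rw [hsplit] at h
  exact (ENNReal.mul_le_mul_iff_left (ENNReal.rpow_pos (pos_iff_ne_zero.2 ha0) ha).ne'
    (ENNReal.rpow_ne_top_of_nonneg (by linarith) ha)).1 h

theorem Real.enorm_iSup_le_iSup_enorm {ι : Sort*} [Nonempty ι] (b : ι → ℝ) :
    ‖⨆ i, b i‖ₑ ≤ ⨆ i, ‖b i‖ₑ := by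
  rcases eq_or_ne (⨆ i, ‖b i‖ₑ) ∞ with h | h
  · simp [h]
  have hb : ∀ i, |b i| ≤ (⨆ i, ‖b i‖ₑ).toReal := fun i => by
    rw [← ENNReal.ofReal_le_iff_le_toReal h, ← Real.enorm_eq_ofReal_abs]
    exact le_iSup (fun i => ‖b i‖ₑ) i
  have hbdd : BddAbove (Set.range b) :=
    ⟨_, Set.forall_mem_range.2 fun i => (abs_le.1 (hb i)).2⟩
  obtain ⟨i₀⟩ := ‹Nonempty ι›
  rw [Real.enorm_eq_ofReal_abs, ENNReal.ofReal_le_iff_le_toReal h, abs_le]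
  exact ⟨(abs_le.1 (hb i₀)).1.trans (le_ciSup hbdd i₀), ciSup_le fun i => (abs_le.1 (hb i)).2⟩

section WeakToStrong

variable {X : Type*} [MeasurableSpace X] {μ : Measure X}

theorem lintegral_rpow_enorm_eq_eLpNorm_rpow {E : Type*} [NormedAddCommGroup E] {f : X → E}
    {p : ℝ} (hp : 0 < p) :
    ∫⁻ x, ‖f x‖ₑ ^ p ∂μ = eLpNorm f (ENNReal.ofReal p) μ ^ p := by
  rw [eLpNorm_eq_eLpNorm' (by simpa using hp) ENNReal.ofReal_ne_top,
    ENNReal.toReal_ofReal hp.le, lintegral_rpow_enorm_eq_rpow_eLpNorm' hp]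

theorem lintegral_enorm_rpow_le_of_mul_meas_lt_le {F g : X → ℝ} (hF0 : 0 ≤ F)
    (hFm : Measurable F) (hgm : Measurable g) {p : ℝ} (hp : 1 < p)
    (hweak : ∀ t > 0,
      ENNReal.ofReal t * μ {x | t < F x} ≤ ∫⁻ x in {x | t < F x}, ENNReal.ofReal (g x) ∂μ) :
    ∫⁻ x, ‖F x‖ₑ ^ p ∂μ ≤
      ENNReal.ofReal (p / (p - 1)) * ∫⁻ x, ENNReal.ofReal (g x) * ‖F x‖ₑ ^ (p - 1) ∂μ := by
  have hp0 : 0 < p := by linarith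
  have hp1 : 0 < p - 1 := by linarith
  have henorm : ∀ q : ℝ, 0 ≤ q → ∀ x, ‖F x‖ₑ ^ q = ENNReal.ofReal (F x ^ q) := fun q hq x => by
    rw [Real.enorm_eq_ofReal (hF0 x), ENNReal.ofReal_rpow_of_nonneg (hF0 x) hq]
  set ν := μ.withDensity fun x => ENNReal.ofReal (g x)
  -- the weak estimate trades one power of `t` against passing from `μ` to `ν = g • μ`
  have hcmp : ∀ t ∈ Set.Ioi (0 : ℝ), μ {x | t < F x} * ENNReal.ofReal (t ^ (p - 1)) ≤
      ν {x | t < F x} * ENNReal.ofReal (t ^ (p - 1 - 1)) := by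
    intro t ht
    rw [withDensity_apply _ (measurableSet_lt measurable_const hFm)]
    calc μ {x | t < F x} * ENNReal.ofReal (t ^ (p - 1))
        = ENNReal.ofReal t * μ {x | t < F x} * ENNReal.ofReal (t ^ (p - 1 - 1)) := by
          rw [mul_comm (ENNReal.ofReal t), mul_assoc, ← ENNReal.ofReal_mul (le_of_lt ht),
            ← Real.rpow_one_add' (le_of_lt ht) (by linarith), add_sub_cancel]
      _ ≤ _ := by gcongr; exact hweak t ht
  calc ∫⁻ x, ‖F x‖ₑ ^ p ∂μ
      = ENNReal.ofReal p * ∫⁻ t in Set.Ioi 0, μ {x | t < F x} * ENNReal.ofReal (t ^ (p - 1)) := by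
        simp_rw [henorm p hp0.le]
        exact lintegral_rpow_eq_lintegral_meas_lt_mul μ (ae_of_all _ hF0) hFm.aemeasurable hp0
    _ ≤ ENNReal.ofReal p *
          ∫⁻ t in Set.Ioi 0, ν {x | t < F x} * ENNReal.ofReal (t ^ (p - 1 - 1)) := by
        gcongr ENNReal.ofReal p * ?_
        exact setLIntegral_mono' measurableSet_Ioi hcmp
    _ = ENNReal.ofReal (p / (p - 1)) * ∫⁻ x, ‖F x‖ₑ ^ (p - 1) ∂ν := by
        have hν := lintegral_rpow_eq_lintegral_meas_lt_mul ν (ae_of_all _ hF0) hFm.aemeasurable hp1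
        simp_rw [henorm (p - 1) hp1.le, hν, ← mul_assoc, ENNReal.ofReal_div_of_pos hp1,
          ENNReal.div_mul_cancel (ENNReal.ofReal_pos.2 hp1).ne' ENNReal.ofReal_ne_top]
    _ = _ := by
        rw [lintegral_withDensity_eq_lintegral_mul _ hgm.ennreal_ofReal (by fun_prop)]
        rfl

theorem lintegral_ofReal_mul_enorm_rpow_le {F g : X → ℝ} (hFm : AEMeasurable F μ)
    (hgm : AEMeasurable g μ) {p : ℝ} (hp : 1 < p) :
    ∫⁻ x, ENNReal.ofReal (g x) * ‖F x‖ₑ ^ (p - 1) ∂μ ≤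
      eLpNorm g (ENNReal.ofReal p) μ * eLpNorm F (ENNReal.ofReal p) μ ^ (p - 1) := by
  have hp0 : 0 < p := by linarith
  have hpq := Real.HolderConjugate.conjExponent hp
  have hq : (p - 1) * p.conjExponent = p := by
    rw [Real.conjExponent]; field_simp [(by linarith : p - 1 ≠ 0)]
  calc ∫⁻ x, ENNReal.ofReal (g x) * ‖F x‖ₑ ^ (p - 1) ∂μ
      ≤ ∫⁻ x, ‖g x‖ₑ * ‖F x‖ₑ ^ (p - 1) ∂μ :=
        lintegral_mono fun x => by gcongr; exact Real.ofReal_le_enorm _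
    _ ≤ (∫⁻ x, ‖g x‖ₑ ^ p ∂μ) ^ (1 / p) *
          (∫⁻ x, (‖F x‖ₑ ^ (p - 1)) ^ p.conjExponent ∂μ) ^ (1 / p.conjExponent) :=
        ENNReal.lintegral_mul_le_Lp_mul_Lq μ hpq hgm.enorm (hFm.enorm.pow_const _)
    _ = _ := by
        simp_rw [← ENNReal.rpow_mul, hq, lintegral_rpow_enorm_eq_eLpNorm_rpow hp0,
          ← ENNReal.rpow_mul]
        have hp1 : p - 1 ≠ 0 := by linarith
        rw [mul_one_div_cancel hp0.ne', ENNReal.rpow_one, Real.conjExponent]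
        congr 2
        field_simp

theorem eLpNorm_le_of_mul_meas_lt_le {F g : X → ℝ} (hF0 : 0 ≤ F) (hFm : Measurable F)
    (hgm : Measurable g) {p : ℝ} (hp : 1 < p) (hF : MemLp F (ENNReal.ofReal p) μ)
    (hweak : ∀ t > 0,
      ENNReal.ofReal t * μ {x | t < F x} ≤ ∫⁻ x in {x | t < F x}, ENNReal.ofReal (g x) ∂μ) :
    eLpNorm F (ENNReal.ofReal p) μ ≤
      ENNReal.ofReal (p / (p - 1)) * eLpNorm g (ENNReal.ofReal p) μ := by
  refine ENNReal.le_of_rpow_le_mul_rpow_sub_one hp hF.eLpNorm_ne_top ?_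
  calc eLpNorm F (ENNReal.ofReal p) μ ^ p
      = ∫⁻ x, ‖F x‖ₑ ^ p ∂μ := (lintegral_rpow_enorm_eq_eLpNorm_rpow (by linarith)).symm
    _ ≤ ENNReal.ofReal (p / (p - 1)) * ∫⁻ x, ENNReal.ofReal (g x) * ‖F x‖ₑ ^ (p - 1) ∂μ :=
        lintegral_enorm_rpow_le_of_mul_meas_lt_le hF0 hFm hgm hp hweak
    _ ≤ _ := by
        rw [mul_assoc]
        gcongr
        exact lintegral_ofReal_mul_enorm_rpow_le hFm.aemeasurable hgm.aemeasurable hp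

theorem eLpNorm_iSup_eq_iSup_eLpNorm {f : ℕ → X → ℝ≥0∞} (hf : ∀ n, AEMeasurable (f n) μ)
    (hmono : ∀ x, Monotone fun n => f n x) {p : ℝ≥0∞} (hp0 : p ≠ 0) (hp_top : p ≠ ∞) :
    eLpNorm (fun x => ⨆ n, f n x) p μ = ⨆ n, eLpNorm (f n) p μ := by
  have hr : 0 < p.toReal := ENNReal.toReal_pos hp0 hp_top
  simp_rw [eLpNorm_eq_lintegral_rpow_enorm_toReal hp0 hp_top, enorm_eq_self]
  have hr' : 0 < 1 / p.toReal := by positivity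
  have hrpow_iSup : ∀ {s : ℝ} (hs : 0 < s) (a : ℕ → ℝ≥0∞), (⨆ n, a n) ^ s = ⨆ n, a n ^ s :=
    fun hs a => (ENNReal.orderIsoRpow _ hs).map_iSup a
  simp_rw [hrpow_iSup hr]
  rw [lintegral_iSup' (fun n => (hf n).pow_const _)
    (ae_of_all _ fun x _ _ h => ENNReal.rpow_le_rpow (hmono x h) hr.le), hrpow_iSup hr']

end WeakToStrong

section Birkhoff

variable {X : Type*} {T : X → X}

theorem norm_birkhoffAverage_le {E : Type*} [SeminormedAddCommGroup E] [NormedSpace ℝ E]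
    (f : X → E) (n : ℕ) (x : X) :
    ‖birkhoffAverage ℝ T f n x‖ ≤ birkhoffAverage ℝ T (fun y => ‖f y‖) n x := by
  simp only [birkhoffAverage, birkhoffSum, norm_smul, smul_eq_mul, norm_inv, Real.norm_natCast]
  gcongr
  exact norm_sum_le _ _

theorem birkhoffAverage_comp_eq_inv_mul_sum_Icc (f : X → ℝ) (n : ℕ) (x : X) :
    birkhoffAverage ℝ T (f ∘ T) n x = (n : ℝ)⁻¹ * ∑ k ∈ Icc 1 n, f (T^[k] x) := by
  rw [birkhoffAverage, birkhoffSum, smul_eq_mul, ← Ico_add_one_right_eq_Icc, sum_Ico_eq_sum_range]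
  simp [add_comm 1, Function.iterate_succ_apply']

theorem lt_birkhoffAverage_iff_pos_birkhoffSum_sub {g : X → ℝ} {n : ℕ} (hn : n ≠ 0) {t : ℝ}
    {x : X} : t < birkhoffAverage ℝ T g n x ↔ 0 < birkhoffSum T (fun y => g y - t) n x := by
  have hconst : birkhoffSum T (fun _ => t) n x = n * t := by
    rw [birkhoffSum_of_comp_eq rfl, Pi.smul_apply, nsmul_eq_mul]
  rw [birkhoffAverage, smul_eq_mul, lt_inv_mul_iff₀ (by positivity),
    show (fun y => g y - t) = g - fun _ => t from rfl, birkhoffSum_sub, hconst, sub_pos]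

theorem Measurable.birkhoffSum [MeasurableSpace X] (hT : Measurable T) {g : X → ℝ}
    (hg : Measurable g) (n : ℕ) : Measurable (birkhoffSum T g n) :=
  Finset.measurable_sum _ fun k _ => hg.comp (hT.iterate k)

theorem MeasureTheory.MemLp.birkhoffSum [MeasurableSpace X] {μ : Measure X}
    (hT : MeasurePreserving T μ μ) {g : X → ℝ} {q : ℝ≥0∞} (hg : MemLp g q μ) (n : ℕ) :
    MemLp (birkhoffSum T g n) q μ :=
  memLp_finsetSum _ fun k _ => hg.comp_measurePreserving (hT.iterate k)

section MaxBirkhoffSum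

def maxBirkhoffSum (T : X → X) (g : X → ℝ) (K : ℕ) : X → ℝ :=
  (range (K + 1)).sup' nonempty_range_add_one fun j => birkhoffSum T g j

variable {g : X → ℝ} {K : ℕ}

theorem maxBirkhoffSum_apply (x : X) :
    maxBirkhoffSum T g K x =
      (range (K + 1)).sup' nonempty_range_add_one fun j => birkhoffSum T g j x :=
  Finset.sup'_apply _ _ _

theorem birkhoffSum_le_maxBirkhoffSum {j : ℕ} (hj : j ≤ K) (x : X) :
    birkhoffSum T g j x ≤ maxBirkhoffSum T g K x := by
  rw [maxBirkhoffSum_apply]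
  exact le_sup' (fun j => birkhoffSum T g j x) (mem_range_succ_iff.2 hj)

theorem maxBirkhoffSum_nonneg (x : X) : 0 ≤ maxBirkhoffSum T g K x :=
  birkhoffSum_zero T g x ▸ birkhoffSum_le_maxBirkhoffSum K.zero_le x

theorem maxBirkhoffSum_le_max_zero_add (x : X) :
    maxBirkhoffSum T g K x ≤ max 0 (g x + maxBirkhoffSum T g K (T x)) := by
  rw [maxBirkhoffSum_apply]
  refine sup'_le _ _ fun j hj => ?_
  rcases j with _ | j
  · simp
  · rw [birkhoffSum_succ']
    have hj : j ≤ K := by simp at hj; omega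
    exact le_max_of_le_right (by gcongr; exact birkhoffSum_le_maxBirkhoffSum hj _)

variable [MeasurableSpace X]

theorem Measurable.maxBirkhoffSum (hT : Measurable T) (hg : Measurable g) (K : ℕ) :
    Measurable (maxBirkhoffSum T g K) :=
  Finset.measurable_sup' _ fun j _ => hT.birkhoffSum hg j

theorem MeasureTheory.MemLp.maxBirkhoffSum {μ : Measure X} (hT : MeasurePreserving T μ μ)
    {q : ℝ≥0∞} (hg : MemLp g q μ) (K : ℕ) : MemLp (maxBirkhoffSum T g K) q μ :=
  sup'_induction (p := fun F => MemLp F q μ) _ _ (fun _ h₁ _ h₂ => h₁.sup h₂)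
    fun j _ => hg.birkhoffSum hT j

/-- The maximal ergodic lemma. -/
theorem MeasureTheory.MeasurePreserving.setIntegral_maxBirkhoffSum_pos_nonneg {μ : Measure X}
    (hT : MeasurePreserving T μ μ) (hgm : Measurable g) (hg : Integrable g μ) (K : ℕ) :
    0 ≤ ∫ x in {x | 0 < maxBirkhoffSum T g K x}, g x ∂μ := by
  set M := maxBirkhoffSum T g K
  set E := {x | 0 < M x}
  have hMm : Measurable M := hT.measurable.maxBirkhoffSum hgm K
  have hM : Integrable M μ := memLp_one_iff_integrable.1 <|
    (memLp_one_iff_integrable.2 hg).maxBirkhoffSum hT K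
  have hMT : Integrable (fun x => M (T x)) μ := hT.integrable_comp_of_integrable hM
  have hMT_integral : ∫ x, M (T x) ∂μ = ∫ x, M x ∂μ := by
    rw [← integral_map hT.aemeasurable (hT.map_eq ▸ hMm.aestronglyMeasurable), hT.map_eq]
  -- `M - M ∘ T` vanishes off `E`, and on `E` it is bounded by `g` since `M ≤ max 0 (g + M ∘ T)`
  have hdiff : ∀ x, M x - M (T x) ≤ E.indicator g x := by
    intro x
    by_cases hx : x ∈ E
    · rw [Set.indicator_of_mem hx]
      have hMx : M x ≤ max 0 (g x + M (T x)) := maxBirkhoffSum_le_max_zero_add x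
      have : M x ≤ g x + M (T x) := (le_max_iff.1 hMx).resolve_left (not_le.2 hx)
      linarith
    · rw [Set.indicator_of_notMem hx]
      have hMTx : 0 ≤ M (T x) := maxBirkhoffSum_nonneg (T x)
      have : M x ≤ 0 := not_lt.1 hx
      linarith
  calc (0 : ℝ) = ∫ x, (M x - M (T x)) ∂μ := by rw [integral_sub hM hMT, hMT_integral, sub_self]
    _ ≤ ∫ x, E.indicator g x ∂μ :=
        integral_mono (hM.sub hMT) (hg.indicator (measurableSet_lt measurable_const hMm)) hdiff
    _ = ∫ x in E, g x ∂μ := integral_indicator (measurableSet_lt measurable_const hMm)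

end MaxBirkhoffSum

section MaxBirkhoffAverage

noncomputable def maxBirkhoffAverage (T : X → X) (g : X → ℝ) (K : ℕ) : X → ℝ :=
  (range (K + 1)).sup' nonempty_range_add_one fun N => birkhoffAverage ℝ T g (N + 1)

variable {g : X → ℝ} {K : ℕ}

theorem maxBirkhoffAverage_apply (x : X) :
    maxBirkhoffAverage T g K x =
      (range (K + 1)).sup' nonempty_range_add_one fun N => birkhoffAverage ℝ T g (N + 1) x :=
  Finset.sup'_apply _ _ _

theorem birkhoffAverage_le_maxBirkhoffAverage {N : ℕ} (hN : N ≤ K) (x : X) :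
    birkhoffAverage ℝ T g (N + 1) x ≤ maxBirkhoffAverage T g K x := by
  rw [maxBirkhoffAverage_apply]
  exact le_sup' (fun N => birkhoffAverage ℝ T g (N + 1) x) (mem_range_succ_iff.2 hN)

theorem maxBirkhoffAverage_nonneg (hg : 0 ≤ g) (x : X) : 0 ≤ maxBirkhoffAverage T g K x :=
  (hg x).trans <| birkhoffAverage_one (R := ℝ) T g x ▸ birkhoffAverage_le_maxBirkhoffAverage
    K.zero_le x

theorem monotone_maxBirkhoffAverage (x : X) : Monotone fun K => maxBirkhoffAverage T g K x :=
  fun K L hKL => by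
    simp_rw [maxBirkhoffAverage_apply]
    exact sup'_mono _ (range_subset_range.2 (by omega)) _

theorem lt_maxBirkhoffAverage_iff {t : ℝ} {x : X} :
    t < maxBirkhoffAverage T g K x ↔ 0 < maxBirkhoffSum T (fun y => g y - t) (K + 1) x := by
  simp only [maxBirkhoffAverage_apply, maxBirkhoffSum_apply, lt_sup'_iff, mem_range]
  constructor
  · rintro ⟨N, hN, h⟩
    exact ⟨N + 1, by omega, (lt_birkhoffAverage_iff_pos_birkhoffSum_sub N.succ_ne_zero).1 h⟩
  · rintro ⟨j, hj, h⟩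
    obtain ⟨N, rfl⟩ : ∃ N, j = N + 1 :=
      Nat.exists_eq_succ_of_ne_zero fun hj0 => by simp [hj0] at h
    exact ⟨N, by omega, (lt_birkhoffAverage_iff_pos_birkhoffSum_sub N.succ_ne_zero).2 h⟩

variable [MeasurableSpace X] {μ : Measure X}

theorem Measurable.maxBirkhoffAverage (hT : Measurable T) (hg : Measurable g) (K : ℕ) :
    Measurable (maxBirkhoffAverage T g K) :=
  Finset.measurable_sup' _ fun N _ =>
    (hT.birkhoffSum hg (N + 1)).const_smul ((N + 1 : ℕ) : ℝ)⁻¹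

theorem MeasureTheory.MemLp.maxBirkhoffAverage (hT : MeasurePreserving T μ μ) {q : ℝ≥0∞}
    (hg : MemLp g q μ) (K : ℕ) : MemLp (maxBirkhoffAverage T g K) q μ :=
  sup'_induction (p := fun F => MemLp F q μ) _ _ (fun _ h₁ _ h₂ => h₁.sup h₂)
    fun N _ => (hg.birkhoffSum hT (N + 1)).const_smul ((N + 1 : ℕ) : ℝ)⁻¹

theorem MeasureTheory.MeasurePreserving.mul_meas_lt_maxBirkhoffAverage_le [IsFiniteMeasure μ]
    (hT : MeasurePreserving T μ μ) (hgm : Measurable g) (hg : Integrable g μ) (hg0 : 0 ≤ g)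
    (K : ℕ) (t : ℝ) :
    ENNReal.ofReal t * μ {x | t < maxBirkhoffAverage T g K x} ≤
      ∫⁻ x in {x | t < maxBirkhoffAverage T g K x}, ENNReal.ofReal (g x) ∂μ := by
  rcases le_or_gt t 0 with ht | ht
  · simp [ENNReal.ofReal_of_nonpos ht]
  set E := {x | t < maxBirkhoffAverage T g K x}
  have hE : E = {x | 0 < maxBirkhoffSum T (fun y => g y - t) (K + 1) x} :=
    Set.ext fun x => lt_maxBirkhoffAverage_iff
  have hgarsia := hT.setIntegral_maxBirkhoffSum_pos_nonneg (g := fun y => g y - t)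
    (hgm.sub measurable_const) (hg.sub (integrable_const t)) (K + 1)
  rw [← hE, integral_sub hg.integrableOn (integrable_const t).integrableOn, setIntegral_const,
    smul_eq_mul, sub_nonneg] at hgarsia
  calc ENNReal.ofReal t * μ E = ENNReal.ofReal (μ.real E * t) := by
        rw [mul_comm, ENNReal.ofReal_mul measureReal_nonneg, ofReal_measureReal]
    _ ≤ ENNReal.ofReal (∫ x in E, g x ∂μ) := ENNReal.ofReal_le_ofReal hgarsia
    _ = ∫⁻ x in E, ENNReal.ofReal (g x) ∂μ :=
        ofReal_integral_eq_lintegral_ofReal hg.integrableOn (ae_of_all _ hg0)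

theorem MeasureTheory.MeasurePreserving.eLpNorm_iSup_maxBirkhoffAverage_le [IsFiniteMeasure μ]
    (hT : MeasurePreserving T μ μ) (hgm : Measurable g) (hg0 : 0 ≤ g) {p : ℝ} (hp : 1 < p)
    (hg : MemLp g (ENNReal.ofReal p) μ) :
    eLpNorm (fun x => ⨆ K, ENNReal.ofReal (maxBirkhoffAverage T g K x)) (ENNReal.ofReal p) μ ≤
      ENNReal.ofReal (p / (p - 1)) * eLpNorm g (ENNReal.ofReal p) μ := by
  have hmeas : ∀ K, Measurable (maxBirkhoffAverage T g K) :=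
    hT.measurable.maxBirkhoffAverage hgm
  rw [eLpNorm_iSup_eq_iSup_eLpNorm (fun K => (hmeas K).ennreal_ofReal.aemeasurable)
    (fun x _ _ h => ENNReal.ofReal_le_ofReal (monotone_maxBirkhoffAverage x h))
    (by simpa using hp.trans' one_pos) ENNReal.ofReal_ne_top]
  refine iSup_le fun K => ?_
  rw [← Function.comp_def, eLpNorm_ofReal _ (ae_of_all _ (maxBirkhoffAverage_nonneg hg0))]
  exact eLpNorm_le_of_mul_meas_lt_le (maxBirkhoffAverage_nonneg hg0) (hmeas K) hgm hp
    (hg.maxBirkhoffAverage hT K) fun t _ => hT.mul_meas_lt_maxBirkhoffAverage_le hgm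
      (hg.integrable (ENNReal.one_le_ofReal.2 hp.le)) hg0 K t

end MaxBirkhoffAverage

end Birkhoff

/-- The `Lᵖ` maximal inequality for ergodic averages with constant `p/(p-1)`. -/
theorem ergodic_maximal_inequality (X : Type*) [MeasurableSpace X] (μ : Measure X)
    [IsProbabilityMeasure μ] (T : X → X) (hT : MeasurePreserving T μ μ)
    (p : ℝ) (hp1 : 1 < p) (f : X → ℝ) (hf : Measurable f)
    (hfp : MemLp f (ENNReal.ofReal p) μ) :
    eLpNorm (fun x => ⨆ N : ℕ, ((N : ℝ) + 1)⁻¹ * ∑ n ∈ Icc 1 (N + 1), f (T^[n] x))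
        (ENNReal.ofReal p) μ ≤
      ENNReal.ofReal (p / (p - 1)) * eLpNorm f (ENNReal.ofReal p) μ := by
  set g : X → ℝ := fun x => ‖f (T x)‖
  have hpointwise : ∀ x,
      ‖⨆ N : ℕ, ((N : ℝ) + 1)⁻¹ * ∑ n ∈ Icc 1 (N + 1), f (T^[n] x)‖ₑ ≤
        ‖⨆ K, ENNReal.ofReal (maxBirkhoffAverage T g K x)‖ₑ := fun x => by
    refine (Real.enorm_iSup_le_iSup_enorm _).trans <| (enorm_eq_self _).symm ▸ iSup_mono fun N => ?_
    rw [← Nat.cast_add_one, ← birkhoffAverage_comp_eq_inv_mul_sum_Icc, ← ofReal_norm]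
    exact ENNReal.ofReal_le_ofReal <| (norm_birkhoffAverage_le _ _ x).trans <|
      birkhoffAverage_le_maxBirkhoffAverage le_rfl x
  calc _ ≤ eLpNorm (fun x => ⨆ K, ENNReal.ofReal (maxBirkhoffAverage T g K x))
        (ENNReal.ofReal p) μ := eLpNorm_mono_enorm hpointwise
    _ ≤ ENNReal.ofReal (p / (p - 1)) * eLpNorm g (ENNReal.ofReal p) μ :=
        hT.eLpNorm_iSup_maxBirkhoffAverage_le (hf.comp hT.measurable).norm
          (fun _ => norm_nonneg _) hp1 (hfp.comp_measurePreserving hT).norm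
    _ = ENNReal.ofReal (p / (p - 1)) * eLpNorm f (ENNReal.ofReal p) μ := by
        rw [show g = fun x => ‖(f ∘ T) x‖ from rfl, eLpNorm_norm,
          eLpNorm_comp_measurePreserving hf.aestronglyMeasurable hT]
end
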